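/- The map sending (λ,μ,κ) ∈ H_ℝ^{(g,h)} to the block matrix [[E_g, 0, 0, μᵀ], [λ, E_h, μ, κ], [0, 0, E_g, −λᵀ], [0, 0, 0, E_h]] is an injective group homomorphism from the Heisenberg group into the symplectic group Sp(g+h, ℝ). -/

import Mathlib

/-!
Write the embedded matrix as `[[A, B], [0, D]]` with `A = [[1, 0], [λ, 1]]` and
`D = [[1, -λᵀ], [0, 1]] = (Aᵀ)⁻¹`. Such a block upper triangular matrix is symplectic exactly
when `A Dᵀ = 1` and `B Aᵀ` is symmetric; here `B Aᵀ = [[0, μᵀ], [μ, μλᵀ + κ]]`, whose symmetry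
is the defining condition of the Heisenberg group. Multiplicativity and injectivity are
blockwise computations. (Mathlib's `J` is `-J_n` and the group is cut out by `M J Mᵀ = J`;
this describes the same group.)
-/

open Matrix

abbrev HTriple (g h : ℕ) :=
  Matrix (Fin h) (Fin g) ℝ × Matrix (Fin h) (Fin g) ℝ × Matrix (Fin h) (Fin h) ℝ

def HCond {g h : ℕ} (x : HTriple g h) : Prop := (x.2.2 + x.2.1 * x.1ᵀ).IsSymm

def Hmul {g h : ℕ} (x y : HTriple g h) : HTriple g h :=
  (x.1 + y.1, x.2.1 + y.2.1, x.2.2 + y.2.2 + x.1 * y.2.1ᵀ - x.2.1 * y.1ᵀ)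

/-- The embedding (λ,μ,κ) ↦ [[E_g,0,0,μᵀ],[λ,E_h,μ,κ],[0,0,E_g,−λᵀ],[0,0,0,E_h]]
    into real matrices of size (g+h)+(g+h). -/
def HEmbed {g h : ℕ} (x : HTriple g h) :
    Matrix ((Fin g ⊕ Fin h) ⊕ (Fin g ⊕ Fin h)) ((Fin g ⊕ Fin h) ⊕ (Fin g ⊕ Fin h)) ℝ :=
  fromBlocks (fromBlocks 1 0 x.1 1) (fromBlocks 0 x.2.1ᵀ x.2.1 x.2.2)
    0 (fromBlocks 1 (-x.1ᵀ) 0 1)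

theorem Matrix.fromBlocks_zero₂₁_mem_symplecticGroup_iff {l R : Type*} [DecidableEq l]
    [Fintype l] [CommRing R] (A B D : Matrix l l R) :
    fromBlocks A B 0 D ∈ symplecticGroup l R ↔ A * Dᵀ = 1 ∧ (B * Aᵀ).IsSymm := by
  have hBA : (B * Aᵀ)ᵀ = A * Bᵀ := by rw [transpose_mul, transpose_transpose]
  have hDA : (A * Dᵀ)ᵀ = D * Aᵀ := by rw [transpose_mul, transpose_transpose]
  rw [SymplecticGroup.mem_iff, J, fromBlocks_transpose, fromBlocks_multiply,
    fromBlocks_multiply]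
  simp only [Matrix.mul_zero, Matrix.zero_mul, Matrix.mul_neg, Matrix.neg_mul, neg_zero,
    Matrix.mul_one, add_zero, zero_add, transpose_zero, fromBlocks_inj, IsSymm, hBA,
    ← sub_eq_add_neg, zero_sub, sub_eq_zero, neg_inj, and_true]
  constructor
  · rintro ⟨hsymm, hAD, -⟩
    exact ⟨hAD, hsymm.symm⟩
  · rintro ⟨hAD, hsymm⟩
    exact ⟨hsymm.symm, hAD, by rw [← hDA, hAD, transpose_one]⟩

theorem HEmbed_mem_symplecticGroup {g h : ℕ} {x : HTriple g h} (hx : HCond x) :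
    HEmbed x ∈ symplecticGroup (Fin g ⊕ Fin h) ℝ := by
  obtain ⟨l, m, k⟩ := x
  rw [HEmbed, fromBlocks_zero₂₁_mem_symplecticGroup_iff]
  simp only [fromBlocks_transpose, fromBlocks_multiply, transpose_one, transpose_zero,
    transpose_neg, transpose_transpose, Matrix.mul_one, Matrix.one_mul, Matrix.mul_zero,
    Matrix.zero_mul, add_zero, zero_add, add_neg_cancel, fromBlocks_one, true_and]
  exact IsSymm.fromBlocks isSymm_zero rfl (by rwa [add_comm])

theorem HEmbed_Hmul {g h : ℕ} (x y : HTriple g h) :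
    HEmbed (Hmul x y) = HEmbed x * HEmbed y := by
  obtain ⟨l, m, k⟩ := x
  obtain ⟨l', m', k'⟩ := y
  simp only [HEmbed, Hmul, fromBlocks_multiply, transpose_add,
    Matrix.mul_one, Matrix.one_mul, Matrix.zero_mul, Matrix.mul_zero, Matrix.mul_neg,
    neg_zero, add_zero, zero_add, fromBlocks_add, fromBlocks_inj, true_and, and_true]
  refine ⟨⟨?_, ?_, ?_⟩, ?_⟩ <;> abel

theorem HEmbed_injective {g h : ℕ} : Function.Injective (HEmbed (g := g) (h := h)) := by
  rintro ⟨l, m, k⟩ ⟨l', m', k'⟩ hxy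
  obtain ⟨⟨-, -, hl, -⟩, ⟨-, -, hm, hk⟩, -⟩ := by simpa only [HEmbed, fromBlocks_inj] using hxy
  rw [hl, hm, hk]

theorem heisenberg_embeds_into_symplectic_general (g h : ℕ) :
    (∀ x : HTriple g h, HCond x →
      HEmbed x ∈ Matrix.symplecticGroup (Fin g ⊕ Fin h) ℝ) ∧
    (∀ x y : HTriple g h, HCond x → HCond y →
      HEmbed (Hmul x y) = HEmbed x * HEmbed y) ∧
    (∀ x y : HTriple g h, HCond x → HCond y → HEmbed x = HEmbed y → x = y) :=
  ⟨fun _ hx => HEmbed_mem_symplecticGroup hx, fun x y _ _ => HEmbed_Hmul x y,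
    fun _ _ _ _ hxy => HEmbed_injective hxy⟩

/-- The embedding of the Heisenberg group into the symplectic group Sp(g+h,ℝ)
    is an injective group homomorphism. -/
theorem heisenberg_embeds_into_symplectic (g h : ℕ) (hg : 0 < g) (hh : 0 < h) :
    (∀ x : HTriple g h, HCond x →
      HEmbed x ∈ Matrix.symplecticGroup (Fin g ⊕ Fin h) ℝ) ∧
    (∀ x y : HTriple g h, HCond x → HCond y →
      HEmbed (Hmul x y) = HEmbed x * HEmbed y) ∧
    (∀ x y : HTriple g h, HCond x → HCond y → HEmbed x = HEmbed y → x = y) :=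
  heisenberg_embeds_into_symplectic_general g h
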